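/- There exist a computable (decidable) validity predicate V : ℕ → ℕ → Bool, an upper-semicomputable loss L : ℕ → ℕ → ℕ — meaning there is a total computable q : ℕ → ℕ → ℕ → ℕ, nonincreasing in the last argument, with L(x,r) = the eventual limit of s ↦ q(x,r,s) — and a computable linear order ≺ on ℕ, such that for every x the set {r : V(x,r) = true} is nonempty, the minimum of L(x,·) over this set is attained, and yet there is NO total computable function f : ℕ → ℕ satisfying, for all x: V(x, f(x)) = true, L(x, f(x)) ≤ L(x, r) for all r with V(x,r) = true, and f(x) ≺-precedes every other minimizer. In particular the ≺-least loss-minimizing response r*(x) is not computable as a function of x. (Theorem 4: decidable validity with upper-semicomputable loss does not admit a computable optimal-response selector; the construction encodes the halting problem into a one-bit tie between two candidate responses.) -/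

import Mathlib

/-!
Let response `1` always cost `0`, and let response `0` cost `0` if program `x` halts on input `0`
and `1` otherwise. Running `x` for `s` steps gives a computable approximation of this loss from
above, and both responses are always valid. Under the usual order on `ℕ` the least minimizer is
`0` exactly when `x` halts, so a computable selector would decide the halting problem.
-/

open Nat.Partrec Nat.Partrec.Code

section HaltingIndicator

variable (n : ℕ) (c : Code)

def haltApprox (s : ℕ) : ℕ := if (evaln s c n).isSome then 0 else 1

open Classical in
noncomputable def haltIndicator : ℕ := if (eval c n).Dom then 0 else 1

theorem primrec_haltApprox : Primrec₂ (haltApprox n) := by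
  have hstage : Primrec₂ fun (c : Code) (s : ℕ) => (evaln s c n).isSome :=
    Primrec.option_isSome.comp <| primrec_evaln.comp
      ((Primrec.snd.pair Primrec.fst).pair (Primrec.const n))
  exact Primrec.ite (Primrec.eq.comp hstage (Primrec.const true))
    (Primrec.const 0) (Primrec.const 1)

theorem antitone_haltApprox : Antitone (haltApprox n c) := by
  intro s t hst
  unfold haltApprox
  by_cases hs : (evaln s c n).isSome
  · obtain ⟨y, hy⟩ := Option.isSome_iff_exists.mp hs
    simp [Option.isSome_iff_exists.mpr ⟨y, evaln_mono hst hy⟩]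
  · rw [if_neg hs]
    split <;> omega

theorem haltApprox_eventually_eq :
    ∃ s₀, ∀ s, s₀ ≤ s → haltApprox n c s = haltIndicator n c := by
  by_cases hdom : (eval c n).Dom
  · obtain ⟨y, hy⟩ := Part.dom_iff_mem.mp hdom
    obtain ⟨s₀, hs₀⟩ := evaln_complete.mp hy
    refine ⟨s₀, fun s hs => ?_⟩
    simp [haltApprox, haltIndicator, hdom, Option.isSome_iff_exists.mpr ⟨y, evaln_mono hs hs₀⟩]
  · have hstage (s : ℕ) : (evaln s c n).isSome = false := by
      refine Bool.eq_false_iff.mpr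
        (Option.not_isSome_iff_eq_none.mpr (Option.eq_none_iff_forall_ne_some.mpr ?_))
      exact fun y hy => hdom (Part.dom_iff_mem.mpr ⟨y, evaln_complete.mpr ⟨s, hy⟩⟩)
    exact ⟨0, fun s _ => by simp [haltApprox, haltIndicator, hdom, hstage]⟩

end HaltingIndicator

section HaltingTie

noncomputable def tieLoss (x r : ℕ) : ℕ :=
  if r = 0 then haltIndicator 0 (Denumerable.ofNat Code x) else 0

def tieApprox (x r s : ℕ) : ℕ :=
  if r = 0 then haltApprox 0 (Denumerable.ofNat Code x) s else 0

theorem computable_tieApprox :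
    Computable fun p : ℕ × ℕ × ℕ => tieApprox p.1 p.2.1 p.2.2 :=
  (Primrec.ite (Primrec.eq.comp (Primrec.fst.comp Primrec.snd) (Primrec.const 0))
    ((primrec_haltApprox 0).comp ((Primrec.ofNat Code).comp Primrec.fst)
      (Primrec.snd.comp Primrec.snd))
    (Primrec.const 0)).to_comp

theorem antitone_tieApprox (x r : ℕ) : Antitone (tieApprox x r) := by
  unfold tieApprox
  split
  · exact antitone_haltApprox 0 _
  · exact antitone_const

theorem tieApprox_eventually_eq (x r : ℕ) :
    ∃ s₀, ∀ s, s₀ ≤ s → tieApprox x r s = tieLoss x r := by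
  unfold tieApprox tieLoss
  split
  · exact haltApprox_eventually_eq 0 _
  · exact ⟨0, fun _ _ => rfl⟩

theorem tieLoss_one_le (x r : ℕ) : tieLoss x 1 ≤ tieLoss x r := Nat.zero_le _

theorem eq_zero_iff_halts_of_isLeastMinimizer {x m : ℕ}
    (hmin : ∀ r ≤ 1, tieLoss x m ≤ tieLoss x r)
    (hleast : ∀ r ≤ 1, (∀ r' ≤ 1, tieLoss x r ≤ tieLoss x r') → r ≠ m → m < r) :
    m = 0 ↔ (eval (Denumerable.ofNat Code x) 0).Dom := by
  constructor
  · rintro rfl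
    by_contra hdiv
    have := hmin 1 le_rfl
    simp [tieLoss, haltIndicator, hdiv] at this
  · intro hhalt
    by_contra hm0
    have hzero_min : ∀ r' ≤ 1, tieLoss x 0 ≤ tieLoss x r' := by
      simp [tieLoss, haltIndicator, hhalt]
    exact absurd (hleast 0 (Nat.zero_le 1) hzero_min (Ne.symm hm0)) (by omega)

end HaltingTie

/-- Theorem 4: decidable validity with an upper-semicomputable loss does not
admit a computable optimal-response selector. There exist a computable validity
predicate `V`, a loss `L` that is the pointwise nonincreasing limit of a total
computable approximation `q`, and a computable strict total (linear) order `≺`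
on `ℕ`, such that every instance has a valid response and the minimum of
`L(x,·)` over valid responses is attained, yet no total computable `f` picks,
for every `x`, a valid minimizer `f x` that `≺`-precedes every other minimizer. -/
theorem no_computable_selector_usc_loss :
    ∃ (V : ℕ → ℕ → Bool) (L : ℕ → ℕ → ℕ) (q : ℕ → ℕ → ℕ → ℕ) (prec : ℕ → ℕ → Bool),
      Computable₂ V ∧
      Computable (fun p : ℕ × ℕ × ℕ => q p.1 p.2.1 p.2.2) ∧
      (∀ x r, Antitone (q x r)) ∧
      (∀ x r, ∃ s₀, ∀ s, s₀ ≤ s → q x r s = L x r) ∧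
      Computable₂ prec ∧
      IsStrictTotalOrder ℕ (fun a b => prec a b = true) ∧
      (∀ x, ∃ r, V x r = true) ∧
      (∀ x, ∃ r, V x r = true ∧ ∀ r', V x r' = true → L x r ≤ L x r') ∧
      ¬ ∃ f : ℕ → ℕ, Computable f ∧ ∀ x,
          V x (f x) = true ∧
          (∀ r, V x r = true → L x (f x) ≤ L x r) ∧
          (∀ r, V x r = true → (∀ r', V x r' = true → L x r ≤ L x r') →
            r ≠ f x → prec (f x) r = true) := by
  refine ⟨fun _ r => decide (r ≤ 1), tieLoss, tieApprox, fun a b => decide (a < b),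
    (Primrec.nat_le.comp Primrec.snd (Primrec.const 1)).decide.to_comp, computable_tieApprox,
    antitone_tieApprox, tieApprox_eventually_eq, Primrec.nat_lt.decide.to_comp,
    by simpa using (inferInstance : IsStrictTotalOrder ℕ (· < ·)),
    fun x => ⟨1, by simp⟩, fun x => ⟨1, by simp, fun r _ => tieLoss_one_le x r⟩, ?_⟩
  rintro ⟨f, hf, hspec⟩
  refine ComputablePred.halting_problem 0 (ComputablePred.computable_iff.mpr
    ⟨fun c => decide (f (Encodable.encode c) = 0),
      (Primrec.eq.comp Primrec.id (Primrec.const 0)).decide.to_comp.comp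
        (hf.comp Computable.encode), funext fun c => ?_⟩)
  obtain ⟨-, hmin, hleast⟩ := hspec (Encodable.encode c)
  simp only [decide_eq_true_eq] at hmin hleast
  have hselect := eq_zero_iff_halts_of_isLeastMinimizer hmin hleast
  rw [Denumerable.ofNat_encode] at hselect
  simpa using hselect.symm
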